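/- arXiv:1507.07860 — 4 statements merged into one kernel-verified Lean document; each statement's English description precedes it below -/
import Mathlib

section
/- Let A be an n×n irreducible nonnegative real matrix with period 1 (aperiodic), and let B be a real matrix. Then |B| = A and sp(B) = −sp(A) (the multiset of negatives of the eigenvalues of A) if and only if B is {−1,1}-diagonally similar to −A. -/
open Matrix

/-- The spectrum of a real square matrix: the multiset of complex roots of its
characteristic polynomial (eigenvalues with multiplicity). -/
noncomputable def spec {ι : Type*} [Fintype ι] [DecidableEq ι] (M : Matrix ι ι ℝ) : Multiset ℂ :=
  (M.map Complex.ofReal).charpoly.roots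

/-- The spectral radius: the maximum of the moduli of the complex eigenvalues. -/
noncomputable def specRadius {ι : Type*} [Fintype ι] [DecidableEq ι] (M : Matrix ι ι ℝ) : ℝ :=
  sSup ((fun z : ℂ => ‖z‖) '' {z | z ∈ spec M})

/-- Entrywise absolute value of a real matrix. -/
def matAbs {ι : Type*} (M : Matrix ι ι ℝ) : Matrix ι ι ℝ := fun i j => |M i j|

/-- A walk of length `k` from `i` to `j` in the digraph of `A`
(arcs are the pairs with nonzero entry). -/
def HasWalk {ι : Type*} (A : Matrix ι ι ℝ) (i j : ι) (k : ℕ) : Prop :=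
  ∃ f : ℕ → ι, f 0 = i ∧ f k = j ∧ ∀ t < k, A (f t) (f (t + 1)) ≠ 0

/-- `A` is irreducible: its digraph is strongly connected. -/
def MatIrreducible {ι : Type*} (A : Matrix ι ι ℝ) : Prop :=
  ∀ i j : ι, ∃ k, HasWalk A i j k

/-- `p` is the period of `A`: the gcd of the lengths of the closed walks of its digraph. -/
def IsPeriod {ι : Type*} (A : Matrix ι ι ℝ) (p : ℕ) : Prop :=
  (∀ k, 0 < k → (∃ i, HasWalk A i i k) → p ∣ k) ∧
  ∀ q : ℕ, (∀ k, 0 < k → (∃ i, HasWalk A i i k) → q ∣ k) → q ∣ p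

/-- `B'` is `{-1,1}`-diagonally similar to `B`:
`B' = Λ⁻¹ * B * Λ` for a diagonal matrix `Λ` with diagonal entries in `{-1,1}`. -/
def DiagSignSimilar {ι : Type*} [Fintype ι] [DecidableEq ι] (B B' : Matrix ι ι ℝ) : Prop :=
  ∃ d : ι → ℝ, (∀ i, d i = 1 ∨ d i = -1) ∧
    B' = (Matrix.diagonal d)⁻¹ * B * Matrix.diagonal d

/-!
Put `C = -B`. Then `|C| = A` and `sp C = sp A`, so `tr C^k = tr A^k` for every `k`, both being
power sums of the same spectrum. Since `|C| ≤ A` entrywise, each diagonal entry `(C^k)_{ii}` is at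
most `(A^k)_{ii}`, hence equal to it; comparing the walk expansions of these entries shows that
every closed walk has the same weight in `C` as in `A`. In a strongly connected digraph this makes
the sign that `C` gives to a walk from a fixed root to `i` independent of the walk; calling it
`d i` yields `C = D A D` with `D = diag d`. Conversely, a diagonal `±1`-similarity preserves both
the spectrum and the entrywise modulus.
-/

open Polynomial

theorem Polynomial.roots_eq_of_eval_eq_prod {K : Type*} [Field K] [Infinite K] {p : K[X]}
    {s : Multiset K} (h : ∀ x, p.eval x = (s.map (x - ·)).prod) : p.roots = s := by
  have hp : p = (s.map (X - C ·)).prod :=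
    Polynomial.funext fun x => by simp [h, eval_multiset_prod]
  rw [hp, roots_multiset_prod_X_sub_C]

section RootsOfCharpoly

variable {K : Type*} [Field K] [IsAlgClosed K] {ι : Type*} [Fintype ι] [DecidableEq ι]

theorem Matrix.eval_charpoly_smul (M : Matrix ι ι K) {c : K} (hc : c ≠ 0) (x : K) :
    (c • M).charpoly.eval x = (M.charpoly.roots.map fun μ => x - c * μ).prod := by
  have h : scalar ι x - c • M = c • (scalar ι (c⁻¹ * x) - M) := by
    ext i j
    by_cases hij : i = j <;> simp [hij, mul_sub, hc]
  rw [eval_charpoly, h, det_smul, ← eval_charpoly,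
    (IsAlgClosed.splits _).eval_eq_prod_roots_of_monic M.charpoly_monic,
    ← M.charpoly_natDegree_eq_dim, ← IsAlgClosed.card_roots_eq_natDegree,
    ← Multiset.prod_replicate, ← Multiset.map_const', ← Multiset.prod_map_mul]
  congr 1
  refine Multiset.map_congr rfl fun μ _ => ?_
  simp [mul_sub, mul_inv_cancel_left₀ hc]

theorem Matrix.roots_charpoly_smul (M : Matrix ι ι K) {c : K} (hc : c ≠ 0) :
    (c • M).charpoly.roots = M.charpoly.roots.map (c * ·) := by
  refine roots_eq_of_eval_eq_prod fun x => ?_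
  rw [eval_charpoly_smul M hc, Multiset.map_map]
  rfl

theorem Matrix.roots_charpoly_pow (M : Matrix ι ι K) {k : ℕ} {ζ : K} (hζ : IsPrimitiveRoot ζ k)
    (hk : 0 < k) : (M ^ k).charpoly.roots = M.charpoly.roots.map (· ^ k) := by
  refine roots_eq_of_eval_eq_prod fun y => ?_
  obtain ⟨x, rfl⟩ := IsAlgClosed.exists_pow_nat_eq y hk
  have hfactor : (C (x ^ k) - X ^ k : K[X]) = ∏ ξ ∈ nthRootsFinset k (1 : K), (C x - C ξ * X) :=
    Polynomial.funext fun y => by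
      simpa [eval_prod] using hζ.pow_sub_pow_eq_prod_sub_mul x y hk
  have haeval (a b : K) : aeval M (C a - C b * X) = scalar ι a - b • M := by
    simp [Algebra.algebraMap_eq_smul_one, smul_eq_diagonal_mul]
  have hroot_ne {ξ : K} (hξ : ξ ∈ nthRootsFinset k (1 : K)) : ξ ≠ 0 := by
    rintro rfl
    simp [mem_nthRootsFinset hk, zero_pow hk.ne'] at hξ
  have hdet : (aeval M (C (x ^ k) - X ^ k)).det
      = ∏ ξ ∈ nthRootsFinset k (1 : K), (aeval M (C x - C ξ * X)).det := by
    rw [hfactor]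
    exact map_prod (detMonoidHom.comp (aeval M).toMonoidHom) _ _
  have hlhs : aeval M (C (x ^ k) - X ^ k) = scalar ι (x ^ k) - M ^ k := by
    simp [Algebra.algebraMap_eq_smul_one, smul_eq_diagonal_mul, diagonal_pow]
  rw [eval_charpoly, ← hlhs, hdet]
  simp_rw [haeval]
  rw [Finset.prod_congr rfl fun ξ hξ => (eval_charpoly (ξ • M) x).symm.trans
    (eval_charpoly_smul M (hroot_ne hξ) x)]
  rw [Finset.prod_eq_multiset_prod, Multiset.prod_map_prod_map, Multiset.map_map]
  refine congrArg Multiset.prod (Multiset.map_congr rfl fun μ _ => ?_)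
  simpa using (hζ.pow_sub_pow_eq_prod_sub_mul x μ hk).symm

end RootsOfCharpoly

section Spectrum

variable {ι : Type*} [Fintype ι] [DecidableEq ι]

theorem spec_eq_roots_charpoly_map (M : Matrix ι ι ℝ) :
    spec M = (M.charpoly.map Complex.ofRealHom).roots := by
  rw [spec, ← charpoly_map]
  rfl

theorem spec_inv_mul_mul {D : Matrix ι ι ℝ} (hD : IsUnit D) (M : Matrix ι ι ℝ) :
    spec (D⁻¹ * M * D) = spec M := by
  obtain ⟨U, rfl⟩ := hD
  rw [spec_eq_roots_charpoly_map, charpoly_units_conj', spec_eq_roots_charpoly_map]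

theorem spec_neg (M : Matrix ι ι ℝ) : spec (-M) = (spec M).map (fun z => -z) := by
  have h : (-M).map Complex.ofReal = (-1 : ℂ) • M.map Complex.ofReal := by
    ext i j
    simp
  rw [spec, h, roots_charpoly_smul _ (by norm_num)]
  simp [spec]

theorem ofReal_trace_pow_eq_sum_spec (M : Matrix ι ι ℝ) {k : ℕ} (hk : 0 < k) :
    (((M ^ k).trace : ℝ) : ℂ) = ((spec M).map (· ^ k)).sum := by
  rw [spec, ← roots_charpoly_pow _ (Complex.isPrimitiveRoot_exp k hk.ne') hk,
    ← trace_eq_sum_roots_charpoly]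
  exact (AddMonoidHom.map_trace Complex.ofRealHom _).trans (by rw [Matrix.map_pow]; rfl)

theorem trace_pow_eq_of_spec_eq {M N : Matrix ι ι ℝ} (h : spec M = spec N) (k : ℕ) :
    (M ^ k).trace = (N ^ k).trace := by
  rcases Nat.eq_zero_or_pos k with rfl | hk
  · simp
  · exact_mod_cast (ofReal_trace_pow_eq_sum_spec M hk).trans
      (h ▸ (ofReal_trace_pow_eq_sum_spec N hk).symm)

end Spectrum

section Walks

variable {ι : Type*}

def walkWeight (M : Matrix ι ι ℝ) (f : ℕ → ι) (k : ℕ) : ℝ :=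
  ∏ t ∈ Finset.range k, M (f t) (f (t + 1))

def walkAppend (f : ℕ → ι) (k : ℕ) (g : ℕ → ι) : ℕ → ι :=
  fun t => if t ≤ k then f t else g (t - k)

theorem walkAppend_of_le {f g : ℕ → ι} {k t : ℕ} (ht : t ≤ k) : walkAppend f k g t = f t :=
  if_pos ht

theorem walkAppend_add {f g : ℕ → ι} {k : ℕ} (hfg : f k = g 0) (t : ℕ) :
    walkAppend f k g (k + t) = g t := by
  rcases Nat.eq_zero_or_pos t with rfl | ht
  · simpa [walkAppend] using hfg
  · simp [walkAppend, show ¬k + t ≤ k by omega]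

theorem walkWeight_append (M : Matrix ι ι ℝ) {f g : ℕ → ι} {k : ℕ} (hfg : f k = g 0) (m : ℕ) :
    walkWeight M (walkAppend f k g) (k + m) = walkWeight M f k * walkWeight M g m := by
  rw [walkWeight, Finset.prod_range_add]
  congr 1
  · refine Finset.prod_congr rfl fun t ht => ?_
    rw [Finset.mem_range] at ht
    rw [walkAppend_of_le ht.le, walkAppend_of_le ht]
  · refine Finset.prod_congr rfl fun t _ => ?_
    rw [walkAppend_add hfg, add_assoc, walkAppend_add hfg]

theorem walkWeight_succ (M : Matrix ι ι ℝ) (f : ℕ → ι) (k : ℕ) :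
    walkWeight M f (k + 1) = walkWeight M f k * M (f k) (f (k + 1)) :=
  Finset.prod_range_succ _ _

theorem walkWeight_ne_zero_iff {M : Matrix ι ι ℝ} {f : ℕ → ι} {k : ℕ} :
    walkWeight M f k ≠ 0 ↔ ∀ t < k, M (f t) (f (t + 1)) ≠ 0 := by
  simp [walkWeight, Finset.prod_ne_zero_iff]

theorem abs_walkWeight {C : Matrix ι ι ℝ} (f : ℕ → ι) (k : ℕ) :
    |walkWeight C f k| = walkWeight (matAbs C) f k :=
  Finset.abs_prod _ _

theorem HasWalk.exists_walkWeight_ne_zero {A : Matrix ι ι ℝ} {i j : ι} {k : ℕ}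
    (h : HasWalk A i j k) : ∃ f : ℕ → ι, f 0 = i ∧ f k = j ∧ walkWeight A f k ≠ 0 := by
  obtain ⟨f, hf0, hfk, hf⟩ := h
  exact ⟨f, hf0, hfk, walkWeight_ne_zero_iff.mpr hf⟩

section SignPotential

variable {A C : Matrix ι ι ℝ} (hCA : matAbs C = A) (hirr : MatIrreducible A)
  (hclosed : ∀ (f : ℕ → ι) (k : ℕ), f 0 = f k → walkWeight C f k = walkWeight A f k)
include hCA hirr hclosed

theorem walkWeight_mul_walkWeight_comm {f g : ℕ → ι} {k m : ℕ} (h0 : f 0 = g 0)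
    (hend : f k = g m) :
    walkWeight C f k * walkWeight A g m = walkWeight C g m * walkWeight A f k := by
  obtain ⟨l, hl⟩ := hirr (f k) (f 0)
  obtain ⟨u, hu0, hul, hu⟩ := hl.exists_walkWeight_ne_zero
  have hCu : walkWeight C u l ≠ 0 := by
    rwa [← abs_ne_zero, abs_walkWeight, hCA]
  have hfu : walkWeight C f k * walkWeight C u l = walkWeight A f k * walkWeight A u l := by
    rw [← walkWeight_append C hu0.symm, ← walkWeight_append A hu0.symm]
    exact hclosed _ _ (by rw [walkAppend_of_le (Nat.zero_le _), walkAppend_add hu0.symm, hul])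
  have hgu : walkWeight C g m * walkWeight C u l = walkWeight A g m * walkWeight A u l := by
    rw [hend] at hu0
    rw [← walkWeight_append C hu0.symm, ← walkWeight_append A hu0.symm]
    exact hclosed _ _ (by rw [walkAppend_of_le (Nat.zero_le _), walkAppend_add hu0.symm, hul, h0])
  refine mul_right_cancel₀ hCu ?_
  linear_combination walkWeight A g m * hfu - walkWeight A f k * hgu

theorem exists_sign_potential :
    ∃ d : ι → ℝ, (∀ i, d i = 1 ∨ d i = -1) ∧ ∀ i j, C i j = d i * A i j * d j := by
  rcases isEmpty_or_nonempty ι with hι | ⟨⟨r⟩⟩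
  · exact ⟨fun _ => 1, fun i => isEmptyElim i, fun i => isEmptyElim i⟩
  have hwalk (i : ι) : ∃ k, ∃ w : ℕ → ι, w 0 = r ∧ w k = i ∧ walkWeight A w k ≠ 0 :=
    let ⟨k, hk⟩ := hirr r i
    ⟨k, hk.exists_walkWeight_ne_zero⟩
  choose k w hw0 hwk hw using hwalk
  set d : ι → ℝ := fun i => walkWeight C (w i) (k i) / walkWeight A (w i) (k i)
  have hCw (i : ι) : walkWeight C (w i) (k i) = d i * walkWeight A (w i) (k i) :=
    (div_mul_cancel₀ _ (hw i)).symm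
  have hd (i : ι) : d i = 1 ∨ d i = -1 := by
    have h : |walkWeight C (w i) (k i)| = walkWeight A (w i) (k i) := by
      rw [abs_walkWeight, hCA]
    rcases (abs_eq ((abs_nonneg _).trans_eq h)).mp h with h' | h'
    · exact Or.inl ((div_eq_one_iff_eq (hw i)).mpr h')
    · exact Or.inr (by simp only [d, h', neg_div, div_self (hw i)])
  refine ⟨d, hd, fun a b => ?_⟩
  by_cases hab : A a b = 0
  · have hC : |C a b| = 0 := by rw [← hab, ← hCA]; rfl
    simp [hab, abs_eq_zero.mp hC]
  let arc : ℕ → ι := fun t => if t = 0 then a else b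
  have harc (M : Matrix ι ι ℝ) : walkWeight M (walkAppend (w a) (k a) arc) (k a + 1)
      = walkWeight M (w a) (k a) * M a b := by
    rw [walkWeight_append M (by simp [arc, hwk])]
    simp [walkWeight, arc]
  have hcomm := walkWeight_mul_walkWeight_comm hCA hirr hclosed
    (f := walkAppend (w a) (k a) arc) (g := w b) (k := k a + 1) (m := k b)
    (by rw [walkAppend_of_le (Nat.zero_le _), hw0, hw0])
    (by rw [walkAppend_add (by simp [arc, hwk])]; simp [arc, hwk])
  rw [harc, harc, hCw, hCw] at hcomm
  have hda : d a * C a b = d b * A a b := by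
    refine mul_left_cancel₀ (mul_ne_zero (hw a) (hw b)) ?_
    linear_combination hcomm
  have hdd : d a * d a = 1 := by rcases hd a with h | h <;> rw [h] <;> norm_num
  linear_combination d a * hda - C a b * hdd

end SignPotential

end Walks

section WalkSums

variable {ι : Type*} [Fintype ι] [DecidableEq ι] {A C : Matrix ι ι ℝ}

theorem abs_pow_apply_le (hCA : ∀ i j, |C i j| ≤ A i j) (k : ℕ) (i j : ι) :
    |(C ^ k) i j| ≤ (A ^ k) i j := by
  induction k generalizing j with
  | zero => by_cases hij : i = j <;> simp [one_apply, hij]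
  | succ k ih =>
    rw [pow_succ, pow_succ, mul_apply, mul_apply]
    refine (Finset.abs_sum_le_sum_abs _ _).trans (Finset.sum_le_sum fun l _ => ?_)
    rw [abs_mul]
    exact mul_le_mul (ih l) (hCA l j) (abs_nonneg _) ((abs_nonneg _).trans (ih l))

/-- Expanding `C ^ k` and `A ^ k` as sums over walks, the walk `f` contributes `walkWeight C f k`
and `walkWeight A f k`, and every other walk contributes less to `C ^ k` in absolute value than
to `A ^ k`. -/
theorem abs_pow_apply_sub_walkWeight_le (hCA : ∀ i j, |C i j| ≤ A i j) (f : ℕ → ι) (k : ℕ) :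
    |(C ^ k) (f 0) (f k) - walkWeight C f k| ≤ (A ^ k) (f 0) (f k) - walkWeight A f k := by
  induction k with
  | zero => simp [walkWeight]
  | succ k ih =>
    have hrest : |∑ m ∈ Finset.univ.erase (f k), (C ^ k) (f 0) m * C m (f (k + 1))|
        ≤ ∑ m ∈ Finset.univ.erase (f k), (A ^ k) (f 0) m * A m (f (k + 1)) := by
      refine (Finset.abs_sum_le_sum_abs _ _).trans (Finset.sum_le_sum fun m _ => ?_)
      rw [abs_mul]
      exact mul_le_mul (abs_pow_apply_le hCA k _ m) (hCA _ _) (abs_nonneg _)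
        ((abs_nonneg _).trans (abs_pow_apply_le hCA k _ m))
    have hlast : |((C ^ k) (f 0) (f k) - walkWeight C f k) * C (f k) (f (k + 1))|
        ≤ ((A ^ k) (f 0) (f k) - walkWeight A f k) * A (f k) (f (k + 1)) := by
      rw [abs_mul]
      exact mul_le_mul ih (hCA _ _) (abs_nonneg _) ((abs_nonneg _).trans ih)
    rw [pow_succ, pow_succ, mul_apply, mul_apply,
      ← Finset.add_sum_erase _ _ (Finset.mem_univ (f k)),
      ← Finset.add_sum_erase _ _ (Finset.mem_univ (f k)), walkWeight_succ, walkWeight_succ]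
    calc _ = |((C ^ k) (f 0) (f k) - walkWeight C f k) * C (f k) (f (k + 1))
          + ∑ m ∈ Finset.univ.erase (f k), (C ^ k) (f 0) m * C m (f (k + 1))| := by ring_nf
      _ ≤ _ := (abs_add_le _ _).trans (add_le_add hlast hrest)
      _ = _ := by ring

theorem walkWeight_eq_of_trace_pow_eq (hCA : ∀ i j, |C i j| ≤ A i j) {k : ℕ}
    (htr : (C ^ k).trace = (A ^ k).trace) {f : ℕ → ι} (hf : f 0 = f k) :
    walkWeight C f k = walkWeight A f k := by
  have hdiag : ∀ i, (C ^ k) i i = (A ^ k) i i :=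
    fun i => (Finset.sum_eq_sum_iff_of_le fun i _ =>
      (le_abs_self _).trans (abs_pow_apply_le hCA k i i)).mp htr i (Finset.mem_univ i)
  have hwalk := abs_pow_apply_sub_walkWeight_le hCA f k
  rw [← hf, hdiag] at hwalk
  have hle : |walkWeight C f k| ≤ walkWeight A f k := by
    rw [abs_walkWeight]
    exact Finset.prod_le_prod (fun _ _ => abs_nonneg _) fun _ _ => hCA _ _
  linarith [le_abs_self (walkWeight C f k), le_abs_self ((A ^ k) (f 0) (f 0) - walkWeight C f k)]

end WalkSums

section SignDiagonal

variable {ι : Type*} [Fintype ι] [DecidableEq ι] {d : ι → ℝ}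

theorem diagonal_mul_self_of_sign (hd : ∀ i, d i = 1 ∨ d i = -1) :
    diagonal d * diagonal d = 1 := by
  rw [diagonal_mul_diagonal, ← diagonal_one]
  congr 1
  funext i
  rcases hd i with h | h <;> simp [h]

theorem diagonal_inv_mul_mul_diagonal_apply (hd : ∀ i, d i = 1 ∨ d i = -1)
    (M : Matrix ι ι ℝ) (i j : ι) :
    ((diagonal d)⁻¹ * M * diagonal d) i j = d i * M i j * d j := by
  rw [inv_eq_left_inv (diagonal_mul_self_of_sign hd), mul_diagonal, diagonal_mul]

end SignDiagonal

theorem stmt_3_general {n : ℕ} (A : Matrix (Fin n) (Fin n) ℝ)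
    (hnn : ∀ i j, 0 ≤ A i j) (hirr : MatIrreducible A)
    (B : Matrix (Fin n) (Fin n) ℝ) :
    (matAbs B = A ∧ spec B = (spec A).map (fun z => -z)) ↔
    DiagSignSimilar (-A) B := by
  constructor
  · rintro ⟨habs, hspec⟩
    have habs' : matAbs (-B) = A := by
      rw [← habs]
      ext i j
      exact abs_neg _
    have hspec' : spec (-B) = spec A := by
      simp [spec_neg, hspec, Multiset.map_map]
    obtain ⟨d, hd, hBd⟩ := exists_sign_potential habs' hirr fun f k hf =>
      walkWeight_eq_of_trace_pow_eq (fun i j => (congrFun₂ habs' i j).le)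
        (trace_pow_eq_of_spec_eq hspec' k) hf
    refine ⟨d, hd, ?_⟩
    ext i j
    rw [diagonal_inv_mul_mul_diagonal_apply hd, neg_apply, ← neg_neg (B i j), ← neg_apply, hBd]
    ring
  · rintro ⟨d, hd, rfl⟩
    refine ⟨?_, ?_⟩
    · ext i j
      change |((diagonal d)⁻¹ * -A * diagonal d) i j| = A i j
      rw [diagonal_inv_mul_mul_diagonal_apply hd, neg_apply, abs_mul, abs_mul, abs_neg,
        abs_of_nonneg (hnn i j)]
      rcases hd i with h | h <;> rcases hd j with h' | h' <;> simp [h, h']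
    · rw [spec_inv_mul_mul (IsUnit.of_mul_eq_one_right _ (diagonal_mul_self_of_sign hd)),
        spec_neg]

theorem stmt_3 {n : ℕ} (A : Matrix (Fin n) (Fin n) ℝ)
    (hnn : ∀ i j, 0 ≤ A i j) (hirr : MatIrreducible A)
    (hper : IsPeriod A 1)
    (B : Matrix (Fin n) (Fin n) ℝ) :
    (matAbs B = A ∧ spec B = (spec A).map (fun z => -z)) ↔
    DiagSignSimilar (-A) B :=
  stmt_3_general A hnn hirr B
end

section
/- Let A be an n×n irreducible nonnegative real matrix and let B, B' be real matrices with |B| = |B'| = A. If there exists an invertible complex diagonal matrix Γ whose diagonal entries all have modulus 1 such that B' = ΓBΓ⁻¹, then B and B' are {−1,1}-diagonally similar. -/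
open Matrix

/-
Write `B' = Γ B Γ⁻¹` entrywise as `B'ᵢⱼ = γᵢ Bᵢⱼ / γⱼ`. On an arc of the digraph, `Bᵢⱼ ≠ 0` and
`|B'ᵢⱼ| = |Bᵢⱼ|`, so squaring gives `γᵢ² = γⱼ²`. Hence `i ↦ γᵢ²` is constant along walks, and by
irreducibility constant everywhere. Fixing a vertex `i₀`, the numbers `dᵢ = γᵢ / γᵢ₀` are then
real signs, and conjugating by `diag d` instead of `Γ` gives the same matrix `B'`.
-/

theorem HasWalk.apply_eq {ι α : Type*} {A : Matrix ι ι ℝ} {f : ι → α}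
    (hf : ∀ i j, A i j ≠ 0 → f i = f j) {k : ℕ} :
    ∀ {i j : ι}, HasWalk A i j k → f i = f j := by
  induction k with
  | zero =>
    rintro i j ⟨w, rfl, rfl, -⟩
    rfl
  | succ k ih =>
    rintro i j ⟨w, rfl, rfl, hw⟩
    exact (hf _ _ (hw 0 k.succ_pos)).trans
      (ih ⟨fun t => w (t + 1), rfl, rfl, fun t ht => hw (t + 1) (by omega)⟩)

theorem MatIrreducible.apply_eq {ι α : Type*} {A : Matrix ι ι ℝ} (hA : MatIrreducible A)
    {f : ι → α} (hf : ∀ i j, A i j ≠ 0 → f i = f j) (i j : ι) : f i = f j :=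
  (hA i j).elim fun _ hw => hw.apply_eq hf

theorem inv_diagonal_of_ne_zero {ι K : Type*} [Fintype ι] [DecidableEq ι] [Field K]
    {γ : ι → K} (hγ : ∀ i, γ i ≠ 0) : (diagonal γ)⁻¹ = diagonal γ⁻¹ :=
  inv_eq_right_inv <| by
    rw [diagonal_mul_diagonal, ← diagonal_one]
    exact congrArg diagonal (funext fun i => mul_inv_cancel₀ (hγ i))

theorem sq_eq_sq_of_ofReal_eq_mul_div {γ₁ γ₂ : ℂ} (hγ₂ : γ₂ ≠ 0) {b b' : ℝ} (hb : b ≠ 0)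
    (habs : |b'| = |b|) (hb' : (b' : ℂ) = γ₁ * b / γ₂) : γ₁ ^ 2 = γ₂ ^ 2 := by
  have hsq : (b' : ℂ) ^ 2 = (b : ℂ) ^ 2 := by exact_mod_cast (sq_eq_sq_iff_abs_eq_abs _ _).mpr habs
  rw [hb', div_pow, mul_pow, div_eq_iff (pow_ne_zero 2 hγ₂)] at hsq
  exact mul_right_cancel₀ (pow_ne_zero 2 (Complex.ofReal_ne_zero.mpr hb))
    (by linear_combination hsq)

theorem DiagSignSimilar.of_apply_eq {ι : Type*} [Fintype ι] [DecidableEq ι] {B B' : Matrix ι ι ℝ}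
    {d : ι → ℝ} (hd : ∀ i, d i = 1 ∨ d i = -1) (h : ∀ i j, B' i j = d i * B i j / d j) :
    DiagSignSimilar B B' := by
  have hd₀ : ∀ i, d i ≠ 0 := fun i => by rcases hd i with h | h <;> simp [h]
  refine ⟨d, hd, ?_⟩
  ext i j
  rw [inv_diagonal_of_ne_zero hd₀, mul_diagonal, diagonal_mul, h]
  rcases hd i with hi | hi <;> rcases hd j with hj | hj <;> simp [hi, hj, div_neg]

theorem stmt_5_general {n : ℕ} (A B B' : Matrix (Fin n) (Fin n) ℝ)
    (hirr : MatIrreducible A)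
    (hBabs : matAbs B = A) (hB'abs : matAbs B' = A)
    (γ : Fin n → ℂ) (hγ : ∀ i, ‖γ i‖ = 1)
    (hconj : B'.map Complex.ofReal =
      Matrix.diagonal γ * B.map Complex.ofReal * (Matrix.diagonal γ)⁻¹) :
    DiagSignSimilar B B' := by
  have hγ₀ : ∀ i, γ i ≠ 0 := fun i => norm_ne_zero_iff.mp (by simp [hγ i])
  have hB' : ∀ i j, (B' i j : ℂ) = γ i * B i j / γ j := fun i j => by
    simpa [inv_diagonal_of_ne_zero hγ₀, mul_diagonal, diagonal_mul, div_eq_mul_inv]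
      using congr($hconj i j)
  have hsq : ∀ i j, γ i ^ 2 = γ j ^ 2 := hirr.apply_eq fun i j hA =>
    sq_eq_sq_of_ofReal_eq_mul_div (hγ₀ j) (fun hB => hA (by simp [← hBabs, matAbs, hB]))
      (congr($hB'abs i j).trans congr($hBabs i j).symm) (hB' i j)
  rcases isEmpty_or_nonempty (Fin n) with hn | ⟨⟨i₀⟩⟩
  · exact DiagSignSimilar.of_apply_eq (d := 1) (fun _ => Or.inl rfl) isEmptyElim
  have hsign : ∀ i, ∃ s : ℝ, (s = 1 ∨ s = -1) ∧ (s : ℂ) * γ i₀ = γ i := fun i => by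
    have : (γ i / γ i₀) ^ 2 = 1 := by rw [div_pow, hsq i i₀, div_self (pow_ne_zero 2 (hγ₀ i₀))]
    rcases sq_eq_one_iff.mp this with h | h <;> rw [div_eq_iff (hγ₀ i₀)] at h
    · exact ⟨1, Or.inl rfl, by simp [h]⟩
    · exact ⟨-1, Or.inr rfl, by simp [h]⟩
  choose d hd hdγ using hsign
  refine DiagSignSimilar.of_apply_eq hd fun i j => Complex.ofReal_injective ?_
  rw [hB', ← hdγ i, ← hdγ j]
  push_cast
  field_simp [hγ₀ i₀]

theorem stmt_5 {n : ℕ} (A B B' : Matrix (Fin n) (Fin n) ℝ)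
    (hnn : ∀ i j, 0 ≤ A i j) (hirr : MatIrreducible A)
    (hBabs : matAbs B = A) (hB'abs : matAbs B' = A)
    (γ : Fin n → ℂ) (hγ : ∀ i, ‖γ i‖ = 1)
    (hconj : B'.map Complex.ofReal =
      Matrix.diagonal γ * B.map Complex.ofReal * (Matrix.diagonal γ)⁻¹) :
    DiagSignSimilar B B' :=
  stmt_5_general A B B' hirr hBabs hB'abs γ hγ hconj
end

section
/- Let A be an n×n irreducible nonnegative real matrix with period p and spectral radius ρ(A), and let B be a real matrix with |B| = A whose spectral radius equals ρ(A). If λ is a complex eigenvalue of B with |λ| = ρ(A), then λ = ρ(A)·e^{iπk/p} for some integer k with 0 ≤ k ≤ 2p−1. -/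
open Matrix

/-!
If `B x = λ x` with `‖λ‖ = ρ(A)`, the triangle inequality gives `ρ |x| ≤ A |x|`. For an
irreducible nonnegative `A` this forces `A |x| = ρ |x|` with `|x| > 0`: otherwise a positive
combination of powers of `A` produces a vector `u > 0` with `A u ≥ (ρ + ε) u`, contradicting the
Collatz–Wielandt bound, which follows from Gelfand's formula. Equality in the triangle
inequality then aligns the phases along every arc: `B_ij x_j / |x_j| = A_ij (λ / ρ) x_i / |x_i|`.
Since `B_ij = ±A_ij`, squaring gives `E_j = γ E_i` with `E_i = (x_i / |x_i|)²` and
`γ = (λ / ρ)²`, so `γ ^ k = 1` for the length `k` of every closed walk. Hence the order of `γ`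
divides the period `p`, i.e. `(λ / ρ) ^ (2p) = 1`.
-/

open Polynomial Filter Topology

section Walks

variable {ι : Type*} {A : Matrix ι ι ℝ}

theorem hasWalk_zero_iff {i j : ι} : HasWalk A i j 0 ↔ i = j :=
  ⟨fun ⟨f, h0, h1, _⟩ => h0 ▸ h1, fun h => ⟨fun _ => i, rfl, h, by simp⟩⟩

theorem hasWalk_succ_iff {i l : ι} {k : ℕ} :
    HasWalk A i l (k + 1) ↔ ∃ j, A i j ≠ 0 ∧ HasWalk A j l k := by
  constructor
  · rintro ⟨f, h0, hk, hf⟩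
    exact ⟨f 1, h0 ▸ hf 0 k.succ_pos, fun t => f (t + 1), rfl, hk,
      fun t ht => hf (t + 1) (by omega)⟩
  · rintro ⟨j, hij, f, h0, hk, hf⟩
    refine ⟨fun t => if t = 0 then i else f (t - 1), rfl, by simpa using hk, fun t ht => ?_⟩
    rcases t with _ | t
    · simpa [h0] using hij
    · simpa using hf t (by omega)

theorem HasWalk.eq_pow_mul {M : Type*} [Monoid M] {E : ι → M} {γ : M}
    (hE : ∀ i j, A i j ≠ 0 → E j = γ * E i) {i j : ι} {k : ℕ} (h : HasWalk A i j k) :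
    E j = γ ^ k * E i := by
  induction k generalizing i with
  | zero => simp [hasWalk_zero_iff.1 h]
  | succ k ih =>
    obtain ⟨l, hil, hl⟩ := hasWalk_succ_iff.1 h
    rw [ih hl, hE i l hil, pow_succ, mul_assoc]

theorem IsPeriod.pow_eq_one {M : Type*} [MonoidWithZero M] [IsRightCancelMulZero M] {p : ℕ}
    (hp : IsPeriod A p) {E : ι → M} (hE0 : ∀ i, E i ≠ 0) {γ : M}
    (hE : ∀ i j, A i j ≠ 0 → E j = γ * E i) :
    γ ^ p = 1 := by
  refine orderOf_dvd_iff_pow_eq_one.1 (hp.2 _ fun k _ ⟨i, hi⟩ => orderOf_dvd_of_pow_eq_one ?_)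
  exact (mul_eq_right₀ (hE0 i)).1 (hi.eq_pow_mul hE).symm

theorem IsPeriod.ne_zero {p : ℕ} (hp : IsPeriod A p) (hirr : MatIrreducible A) (hA : A ≠ 0) :
    p ≠ 0 := by
  obtain ⟨i, j, hij⟩ : ∃ i j, A i j ≠ 0 := by
    by_contra! h
    exact hA (Matrix.ext h)
  obtain ⟨k, hji⟩ := hirr j i
  rintro rfl
  simpa using hp.1 (k + 1) k.succ_pos ⟨i, hasWalk_succ_iff.2 ⟨j, hij, hji⟩⟩

variable [Fintype ι] [DecidableEq ι]

theorem HasWalk.pow_apply_pos (hA : ∀ i j, 0 ≤ A i j) {i j : ι} {k : ℕ} (h : HasWalk A i j k) :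
    0 < (A ^ k) i j := by
  induction k generalizing i with
  | zero => simp [hasWalk_zero_iff.1 h]
  | succ k ih =>
    obtain ⟨l, hil, hl⟩ := hasWalk_succ_iff.1 h
    rw [pow_succ', Matrix.mul_apply]
    exact Finset.sum_pos' (fun m _ => mul_nonneg (hA i m) (pow_apply_nonneg hA k m j))
      ⟨l, Finset.mem_univ _, mul_pos ((hA i l).lt_of_ne' hil) (ih hl)⟩

theorem MatIrreducible.exists_sum_pow_pos (hA : ∀ i j, 0 ≤ A i j) (hirr : MatIrreducible A) :
    ∃ N, ∀ i j, 0 < (∑ k ∈ Finset.range N, A ^ k) i j := by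
  have hwalk : ∀ i j, ∃ k, HasWalk A i j k := hirr
  choose K hK using hwalk
  refine ⟨Finset.univ.sup (fun ij : ι × ι => K ij.1 ij.2) + 1, fun i j => ?_⟩
  rw [Matrix.sum_apply]
  refine Finset.sum_pos' (fun k _ => pow_apply_nonneg hA k i j)
    ⟨K i j, Finset.mem_range.2 (Nat.lt_succ_of_le ?_), (hK i j).pow_apply_pos hA⟩
  exact Finset.le_sup (f := fun ij : ι × ι => K ij.1 ij.2) (Finset.mem_univ (i, j))

end Walks

section Positivity

variable {ι : Type*} [Fintype ι] {A : Matrix ι ι ℝ}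

theorem mulVec_mono_of_nonneg (hA : ∀ i j, 0 ≤ A i j) {v w : ι → ℝ} (h : v ≤ w) :
    A *ᵥ v ≤ A *ᵥ w := fun i =>
  Finset.sum_le_sum fun j _ => mul_le_mul_of_nonneg_left (h j) (hA i j)

theorem pow_smul_le_pow_mulVec [DecidableEq ι] (hA : ∀ i j, 0 ≤ A i j) {u : ι → ℝ} {c : ℝ}
    (hc : 0 ≤ c) (h : c • u ≤ A *ᵥ u) (m : ℕ) : c ^ m • u ≤ A ^ m *ᵥ u := by
  induction m with
  | zero => simp
  | succ m ih =>
    calc c ^ (m + 1) • u = c • (c ^ m • u) := by rw [pow_succ', mul_smul]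
      _ ≤ c • (A ^ m *ᵥ u) := smul_le_smul_of_nonneg_left ih hc
      _ = A ^ m *ᵥ (c • u) := (mulVec_smul _ _ _).symm
      _ ≤ A ^ m *ᵥ (A *ᵥ u) := mulVec_mono_of_nonneg (pow_apply_nonneg hA m) h
      _ = A ^ (m + 1) *ᵥ u := by rw [mulVec_mulVec, pow_succ]

theorem mulVec_pos_of_pos {C : Matrix ι ι ℝ} (hC : ∀ i j, 0 < C i j) {y : ι → ℝ} (hy : 0 ≤ y)
    (hy0 : y ≠ 0) (i : ι) : 0 < (C *ᵥ y) i := by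
  obtain ⟨j, hj⟩ := Function.ne_iff.1 hy0
  exact Finset.sum_pos' (fun k _ => mul_nonneg (hC i k).le (hy k))
    ⟨j, Finset.mem_univ _, mul_pos (hC i j) ((hy j).lt_of_ne' hj)⟩

theorem exists_pos_smul_le {v w : ι → ℝ} (hw : ∀ i, 0 < w i) : ∃ ε : ℝ, 0 < ε ∧ ε • v ≤ w := by
  have hnear : ∀ᶠ ε in 𝓝[>] (0 : ℝ), ∀ i, ε * v i < w i := by
    refine Filter.eventually_all.2 fun i => nhdsWithin_le_nhds ?_
    exact ((continuous_mul_const (v i)).tendsto' 0 0 (zero_mul _)).eventually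
      (gt_mem_nhds (hw i))
  obtain ⟨ε, hε, hεpos⟩ := (hnear.and self_mem_nhdsWithin).exists
  exact ⟨ε, hεpos, fun i => (hε i).le⟩

end Positivity

section SpectralRadius

variable {ι : Type*} [Fintype ι] [DecidableEq ι]

theorem mem_spec_iff {M : Matrix ι ι ℝ} {z : ℂ} :
    z ∈ spec M ↔ z ∈ spectrum ℂ (M.map Complex.ofReal) := by
  rw [spec, mem_roots (charpoly_monic _).ne_zero, mem_spectrum_iff_isRoot_charpoly]

theorem exists_mulVec_eq_smul_of_mem_spec {M : Matrix ι ι ℝ} {z : ℂ} (h : z ∈ spec M) :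
    ∃ x : ι → ℂ, x ≠ 0 ∧ M.map Complex.ofReal *ᵥ x = z • x := by
  rw [mem_spec_iff, ← spectrum_toLin', ← Module.End.hasEigenvalue_iff_mem_spectrum] at h
  obtain ⟨x, hx⟩ := h.exists_hasEigenvector
  exact ⟨x, hx.2, by simpa using Module.End.mem_eigenspace_iff.1 hx.1⟩

theorem norm_le_specRadius {M : Matrix ι ι ℝ} {z : ℂ} (h : z ∈ spec M) : ‖z‖ ≤ specRadius M :=
  le_csSup ((spec M).finite_toSet.image _).bddAbove ⟨z, h, rfl⟩

theorem specRadius_nonneg [Nonempty ι] (M : Matrix ι ι ℝ) : 0 ≤ specRadius M := by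
  obtain ⟨z, hz⟩ := Complex.exists_root (f := (M.map Complex.ofReal).charpoly) (by
    rw [charpoly_degree_eq_dim]; exact_mod_cast Fintype.card_pos)
  exact (norm_nonneg z).trans (norm_le_specRadius (mem_spec_iff.2
    (mem_spectrum_iff_isRoot_charpoly.2 hz)))

theorem spectralRadius_map_ofReal_le (M : Matrix ι ι ℝ) :
    spectralRadius ℂ (M.map Complex.ofReal) ≤ ENNReal.ofReal (specRadius M) := by
  refine iSup₂_le fun z hz => ?_
  rw [← ENNReal.ofReal_coe_nnreal, coe_nnnorm]
  exact ENNReal.ofReal_le_ofReal (norm_le_specRadius (mem_spec_iff.2 hz))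

end SpectralRadius

theorem ofReal_le_spectralRadius_of_mul_pow_le_norm_pow {𝔸 : Type*} [NormedRing 𝔸]
    [NormedAlgebra ℂ 𝔸] [CompleteSpace 𝔸] {a : 𝔸} {c δ : ℝ} (hδ : 0 < δ) (hc : 0 ≤ c)
    (h : ∀ m : ℕ, δ * c ^ m ≤ ‖a ^ m‖) : ENNReal.ofReal c ≤ spectralRadius ℂ a := by
  have hlim : Tendsto (fun m : ℕ => ENNReal.ofReal (δ ^ (1 / (m : ℝ)) * c)) atTop
      (𝓝 (ENNReal.ofReal c)) := by
    refine ENNReal.tendsto_ofReal ?_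
    have : Tendsto (fun m : ℕ => δ ^ (1 / (m : ℝ))) atTop (𝓝 1) := by
      simpa [Function.comp_def] using (Real.continuousAt_const_rpow hδ.ne').tendsto.comp
        tendsto_one_div_atTop_nhds_zero_nat
    simpa using this.mul_const c
  refine le_of_tendsto_of_tendsto hlim
    (spectrum.pow_norm_pow_one_div_tendsto_nhds_spectralRadius a) ?_
  filter_upwards [eventually_ne_atTop 0] with m hm
  refine ENNReal.ofReal_le_ofReal ?_
  calc δ ^ (1 / (m : ℝ)) * c = (δ * c ^ m) ^ (1 / (m : ℝ)) := by
        rw [Real.mul_rpow hδ.le (by positivity), one_div, Real.pow_rpow_inv_natCast hc hm]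
    _ ≤ ‖a ^ m‖ ^ (1 / (m : ℝ)) := Real.rpow_le_rpow (by positivity) (h m) (by positivity)

section CollatzWielandt

attribute [local instance] Matrix.linftyOpNormedRing Matrix.linftyOpNormedAlgebra

variable {ι : Type*} [Fintype ι] [DecidableEq ι]

theorem linfty_opNorm_map_ofReal (M : Matrix ι ι ℝ) : ‖M.map Complex.ofReal‖ = ‖M‖ := by
  simp [linfty_opNorm_def]

theorem le_specRadius_of_smul_le_mulVec {A : Matrix ι ι ℝ} (hA : ∀ i j, 0 ≤ A i j)
    {u : ι → ℝ} (hu : 0 ≤ u) (hu0 : u ≠ 0) {c : ℝ} (hc : 0 ≤ c) (h : c • u ≤ A *ᵥ u) :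
    c ≤ specRadius A := by
  obtain ⟨i, hi⟩ := Function.ne_iff.1 hu0
  have hui : 0 < u i := (hu i).lt_of_ne' hi
  have hunorm : 0 < ‖u‖ := norm_pos_iff.2 hu0
  have hgrowth : ∀ m : ℕ, u i / ‖u‖ * c ^ m ≤ ‖A.map Complex.ofReal ^ m‖ := by
    intro m
    have hpow : A.map Complex.ofReal ^ m = (A ^ m).map Complex.ofReal :=
      (A.map_pow Complex.ofRealHom m).symm
    rw [hpow, linfty_opNorm_map_ofReal, div_mul_eq_mul_div, div_le_iff₀ hunorm]
    calc u i * c ^ m = (c ^ m • u) i := by simp [mul_comm]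
      _ ≤ (A ^ m *ᵥ u) i := pow_smul_le_pow_mulVec hA hc h m i
      _ ≤ ‖A ^ m *ᵥ u‖ := (Real.le_norm_self _).trans (norm_le_pi_norm _ i)
      _ ≤ ‖A ^ m‖ * ‖u‖ := linfty_opNorm_mulVec _ _
  have : CompleteSpace (Matrix ι ι ℂ) := FiniteDimensional.complete ℂ _
  have hle := (ofReal_le_spectralRadius_of_mul_pow_le_norm_pow (div_pos hui hunorm) hc
    hgrowth).trans (spectralRadius_map_ofReal_le A)
  have : Nonempty ι := ⟨i⟩
  exact (ENNReal.ofReal_le_ofReal_iff (specRadius_nonneg A)).1 hle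

end CollatzWielandt

section Irreducible

variable {ι : Type*} [Fintype ι] [DecidableEq ι] {A : Matrix ι ι ℝ}

theorem MatIrreducible.mulVec_eq_specRadius_smul (hA : ∀ i j, 0 ≤ A i j)
    (hirr : MatIrreducible A) {y : ι → ℝ} (hy : 0 ≤ y) (hy0 : y ≠ 0)
    (h : specRadius A • y ≤ A *ᵥ y) : A *ᵥ y = specRadius A • y := by
  set ρ := specRadius A
  by_contra hne
  obtain ⟨N, hC⟩ := hirr.exists_sum_pow_pos hA
  set C := ∑ k ∈ Finset.range N, A ^ k
  obtain ⟨j, -⟩ := Function.ne_iff.1 hy0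
  have hcomm : A * C = C * A := (Commute.sum_right _ _ _ fun k _ => Commute.self_pow A k).eq
  have hAu : A *ᵥ (C *ᵥ y) = ρ • (C *ᵥ y) + C *ᵥ (A *ᵥ y - ρ • y) := by
    rw [mulVec_mulVec, hcomm, ← mulVec_mulVec, mulVec_sub, mulVec_smul, add_sub_cancel]
  have hu := mulVec_pos_of_pos hC hy hy0
  obtain ⟨ε, hε, hεle⟩ := exists_pos_smul_le (v := C *ᵥ y)
    (mulVec_pos_of_pos hC (sub_nonneg.2 h) (sub_ne_zero.2 hne))
  have : Nonempty ι := ⟨j⟩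
  have hgrow : ρ + ε ≤ ρ := by
    refine le_specRadius_of_smul_le_mulVec hA (fun i => (hu i).le)
      (fun h0 => (hu j).ne' (congrFun h0 j)) (by linarith [specRadius_nonneg A]) ?_
    rw [hAu, add_smul]
    exact add_le_add_right hεle _
  linarith

theorem MatIrreducible.pos_of_mulVec_eq_smul (hA : ∀ i j, 0 ≤ A i j) (hirr : MatIrreducible A)
    {y : ι → ℝ} (hy : 0 ≤ y) (hy0 : y ≠ 0) {r : ℝ} (h : A *ᵥ y = r • y) (i : ι) : 0 < y i := by
  obtain ⟨N, hC⟩ := hirr.exists_sum_pow_pos hA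
  have hpow : ∀ k, A ^ k *ᵥ y = r ^ k • y := by
    intro k
    induction k with
    | zero => simp
    | succ k ih => rw [pow_succ, ← mulVec_mulVec, h, mulVec_smul, ih, smul_smul, ← pow_succ']
  have hCy := mulVec_pos_of_pos hC hy hy0 i
  simp only [sum_mulVec, hpow, ← Finset.sum_smul, Pi.smul_apply, smul_eq_mul] at hCy
  exact (hy i).lt_of_ne' (right_ne_zero_of_mul hCy.ne')

end Irreducible

theorem sameRay_of_norm_sum_eq_sum_norm {κ E : Type*} [NormedAddCommGroup E] [NormedSpace ℝ E]
    [StrictConvexSpace ℝ E] {s : Finset κ} {a : κ → E} (h : ‖∑ k ∈ s, a k‖ = ∑ k ∈ s, ‖a k‖)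
    {j : κ} (hj : j ∈ s) : SameRay ℝ (a j) (∑ k ∈ s, a k) := by
  classical
  rw [← Finset.add_sum_erase s a hj] at h ⊢
  refine SameRay.rfl.add_right (sameRay_iff_norm_add.2 (le_antisymm (norm_add_le _ _) ?_))
  calc ‖a j‖ + ‖∑ k ∈ s.erase j, a k‖ ≤ ‖a j‖ + ∑ k ∈ s.erase j, ‖a k‖ := by
        gcongr; exact norm_sum_le _ _
    _ = ∑ k ∈ s, ‖a k‖ := Finset.add_sum_erase s (fun k => ‖a k‖) hj
    _ = _ := h.symm

section Phases

variable {ι : Type*} [Fintype ι] {A B : Matrix ι ι ℝ} {x : ι → ℂ} {lam : ℂ}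

theorem row_sum_eq_of_mulVec_eq_smul (hx : B.map Complex.ofReal *ᵥ x = lam • x) (i : ι) :
    ∑ k, (B i k : ℂ) * x k = lam * x i := by
  simpa [mulVec, dotProduct] using congrFun hx i

theorem norm_smul_le_mulVec_norm (hBA : matAbs B = A)
    (hx : B.map Complex.ofReal *ᵥ x = lam • x) :
    ‖lam‖ • (fun i => ‖x i‖) ≤ A *ᵥ fun i => ‖x i‖ := by
  intro i
  calc ‖lam‖ * ‖x i‖ = ‖∑ k, (B i k : ℂ) * x k‖ := by
        rw [row_sum_eq_of_mulVec_eq_smul hx, norm_mul]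
    _ ≤ ∑ k, ‖(B i k : ℂ) * x k‖ := norm_sum_le _ _
    _ = (A *ᵥ fun i => ‖x i‖) i := by simp [mulVec, dotProduct, ← hBA, matAbs]

theorem mul_eq_of_mulVec_norm_eq (hBA : matAbs B = A) (hx : B.map Complex.ofReal *ᵥ x = lam • x)
    (hinv : A *ᵥ (fun i => ‖x i‖) = ‖lam‖ • fun i => ‖x i‖) (i j : ι) :
    ((‖lam‖ * ‖x i‖ : ℝ) : ℂ) * (B i j * x j) = ((A i j * ‖x j‖ : ℝ) : ℂ) * (lam * x i) := by
  have hnorm : ‖∑ k, (B i k : ℂ) * x k‖ = ∑ k, ‖(B i k : ℂ) * x k‖ := by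
    have := congrFun hinv i
    simp only [mulVec, dotProduct, ← hBA, matAbs, Pi.smul_apply, smul_eq_mul] at this
    simp [row_sum_eq_of_mulVec_eq_smul hx, ← this]
  have hray := sameRay_iff_norm_smul_eq.1
    (sameRay_of_norm_sum_eq_sum_norm hnorm (Finset.mem_univ j))
  rw [row_sum_eq_of_mulVec_eq_smul hx] at hray
  simpa [Complex.real_smul, ← hBA, matAbs] using hray.symm

theorem sq_div_norm_eq_of_apply_ne_zero (hBA : matAbs B = A)
    (hx : B.map Complex.ofReal *ᵥ x = lam • x)
    (hinv : A *ᵥ (fun i => ‖x i‖) = ‖lam‖ • fun i => ‖x i‖) (hlam : lam ≠ 0)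
    (hx0 : ∀ i, x i ≠ 0) {i j : ι} (hij : A i j ≠ 0) :
    (x j / ‖x j‖) ^ 2 = (lam / ‖lam‖) ^ 2 * (x i / ‖x i‖) ^ 2 := by
  have hsq := congrArg (· ^ 2) (mul_eq_of_mulVec_norm_eq hBA hx hinv i j)
  have hB : (B i j : ℂ) ^ 2 = (A i j : ℂ) ^ 2 := by
    rw [← hBA, matAbs]; norm_cast; exact (sq_abs _).symm
  have hA : (A i j : ℂ) ^ 2 ≠ 0 := by exact_mod_cast pow_ne_zero 2 hij
  have hxi : (‖x i‖ : ℂ) ≠ 0 := by simpa using hx0 i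
  have hxj : (‖x j‖ : ℂ) ≠ 0 := by simpa using hx0 j
  have hl : (‖lam‖ : ℂ) ≠ 0 := by simpa using hlam
  field_simp
  apply mul_left_cancel₀ hA
  push_cast at hsq
  linear_combination hsq - x j ^ 2 * (‖lam‖ : ℂ) ^ 2 * (‖x i‖ : ℂ) ^ 2 * hB

end Phases

theorem exists_eq_exp_of_pow_eq_one {c : ℂ} {p : ℕ} (hp : p ≠ 0) (hc : c ^ (2 * p) = 1) :
    ∃ k : ℕ, k ≤ 2 * p - 1 ∧ c = Complex.exp (Complex.I * Real.pi * k / p) := by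
  have : NeZero (2 * p) := ⟨by omega⟩
  obtain ⟨k, hk, hke⟩ :=
    (Complex.isPrimitiveRoot_exp (2 * p) (by omega)).eq_pow_of_pow_eq_one hc
  refine ⟨k, by omega, ?_⟩
  rw [← hke, ← Complex.exp_nat_mul]
  congr 1
  push_cast
  field_simp

theorem stmt_6_general {n : ℕ} (A : Matrix (Fin n) (Fin n) ℝ)
    (hnn : ∀ i j, 0 ≤ A i j) (hirr : MatIrreducible A)
    (p : ℕ) (hp : IsPeriod A p)
    (B : Matrix (Fin n) (Fin n) ℝ) (hBabs : matAbs B = A)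
    (lam : ℂ) (hmem : lam ∈ spec B) (hlam : ‖lam‖ = specRadius A) :
    ∃ k : ℕ, k ≤ 2 * p - 1 ∧
      lam = (specRadius A : ℂ) * Complex.exp (Complex.I * Real.pi * k / p) := by
  rw [← hlam]
  rcases (norm_nonneg lam).eq_or_lt with hzero | hpos
  · exact ⟨0, Nat.zero_le _, by simp [norm_eq_zero.1 hzero.symm]⟩
  obtain ⟨x, hx0, hx⟩ := exists_mulVec_eq_smul_of_mem_spec hmem
  set y : Fin n → ℝ := fun i => ‖x i‖
  have hy : 0 ≤ y := fun i => norm_nonneg _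
  have hy0 : y ≠ 0 := fun h => hx0 (funext fun i => norm_eq_zero.1 (congrFun h i))
  have hinv : A *ᵥ y = ‖lam‖ • y := hlam ▸
    hirr.mulVec_eq_specRadius_smul hnn hy hy0 (hlam ▸ norm_smul_le_mulVec_norm hBabs hx)
  have hxne : ∀ i, x i ≠ 0 := fun i =>
    norm_pos_iff.1 (hirr.pos_of_mulVec_eq_smul hnn hy hy0 hinv i)
  have hγ : ((lam / ‖lam‖) ^ 2) ^ p = 1 :=
    hp.pow_eq_one (E := fun i => (x i / ‖x i‖) ^ 2) (fun i => by simp [hxne i])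
      fun i j hij => sq_div_norm_eq_of_apply_ne_zero hBabs hx hinv (norm_pos_iff.1 hpos) hxne hij
  have hA0 : A ≠ 0 := fun h => hy0 (by simpa [h, hpos.ne'] using hinv.symm)
  obtain ⟨k, hk, hexp⟩ := exists_eq_exp_of_pow_eq_one (hp.ne_zero hirr hA0) (by rw [pow_mul, hγ])
  exact ⟨k, hk, by rw [← hexp, mul_div_cancel₀ _ (by exact_mod_cast hpos.ne')]⟩

theorem stmt_6 {n : ℕ} (A : Matrix (Fin n) (Fin n) ℝ)
    (hnn : ∀ i j, 0 ≤ A i j) (hirr : MatIrreducible A)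
    (p : ℕ) (hp : IsPeriod A p)
    (B : Matrix (Fin n) (Fin n) ℝ) (hBabs : matAbs B = A)
    (hρ : specRadius B = specRadius A)
    (lam : ℂ) (hmem : lam ∈ spec B) (hlam : ‖lam‖ = specRadius A) :
    ∃ k : ℕ, k ≤ 2 * p - 1 ∧
      lam = (specRadius A : ℂ) * Complex.exp (Complex.I * Real.pi * k / p) :=
  stmt_6_general A hnn hirr p hp B hBabs lam hmem hlam
end

section
/- Let A be an n×n irreducible nonnegative real matrix with period p > 1. Then for every integer k with 0 ≤ k ≤ 2p−1, there exists a real matrix B with |B| = A and sp(B) = e^{iπk/p}·sp(A). -/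
/-!
Since the lengths of all closed walks are divisible by `p`, strong connectivity yields a
coloring `c : ι → ZMod p` of the vertices in which every arc goes from class `c` to class
`c + 1` (color a vertex by the length of any walk reaching it from a base vertex). If
`z ^ p = ε`, a diagonal similarity by the powers `z ^ c i` turns `z • A` into `A` with the rows
of the last class multiplied by `ε`; similar matrices share their characteristic polynomial,
and scaling a matrix by `z` scales the roots of its characteristic polynomial by `z`.
Taking `z = exp (iπk/p)` and `ε = (-1) ^ k` gives the matrix `B`.
-/

open Matrix

namespace HasWalk

variable {ι : Type*} {A : Matrix ι ι ℝ}

theorem of_ne_zero {i j : ι} (h : A i j ≠ 0) : HasWalk A i j 1 :=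
  ⟨fun t => if t = 0 then i else j, rfl, rfl, fun t ht => by
    obtain rfl : t = 0 := by omega
    simpa using h⟩

theorem trans {i j l : ι} {a b : ℕ} (h₁ : HasWalk A i j a) (h₂ : HasWalk A j l b) :
    HasWalk A i l (a + b) := by
  obtain ⟨f, rfl, rfl, hf⟩ := h₁
  obtain ⟨g, hg₀, rfl, hg⟩ := h₂
  refine ⟨fun t => if t ≤ a then f t else g (t - a), by simp, ?_, fun t ht => ?_⟩
  · rcases Nat.eq_zero_or_pos b with rfl | hb
    · simp [hg₀]
    · simp [show ¬a + b ≤ a by omega]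
  · by_cases hta : t < a
    · simpa [hta.le, Nat.succ_le_of_lt hta] using hf t hta
    · have hg' := hg (t - a) (by omega)
      rw [show t - a + 1 = t + 1 - a by omega] at hg'
      rcases eq_or_lt_of_not_gt hta with rfl | hat
      · simpa [← hg₀] using hg'
      · simpa [show ¬t ≤ a by omega, show ¬t + 1 ≤ a by omega] using hg'

end HasWalk

theorem exists_cyclic_coloring {ι : Type*} {A : Matrix ι ι ℝ} (hirr : MatIrreducible A)
    {p : ℕ} (hp : ∀ k, 0 < k → (∃ i, HasWalk A i i k) → p ∣ k) :
    ∃ c : ι → ZMod p, ∀ i j, A i j ≠ 0 → c j = c i + 1 := by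
  rcases isEmpty_or_nonempty ι with hι | ⟨⟨v⟩⟩
  · exact ⟨isEmptyElim, fun i => isEmptyElim i⟩
  have closed : ∀ m, HasWalk A v v m → (m : ZMod p) = 0 := fun m hm => by
    rcases Nat.eq_zero_or_pos m with rfl | hm₀
    · exact Nat.cast_zero
    · exact (ZMod.natCast_eq_zero_iff m p).2 (hp m hm₀ ⟨v, hm⟩)
  have lengths_eq : ∀ j a b, HasWalk A v j a → HasWalk A v j b → (a : ZMod p) = b := by
    intro j a b ha hb
    obtain ⟨m, hm⟩ := hirr j v
    have h₁ := closed _ (ha.trans hm)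
    have h₂ := closed _ (hb.trans hm)
    push_cast at h₁ h₂
    linear_combination h₁ - h₂
  choose len hlen using hirr v
  refine ⟨fun i => len i, fun i j hij => ?_⟩
  simpa using lengths_eq j _ _ (hlen j) ((hlen i).trans (HasWalk.of_ne_zero hij))

namespace Matrix

variable {ι K : Type*} [Fintype ι] [DecidableEq ι] [Field K]

theorem charpoly_smul [Infinite K] (M : Matrix ι ι K) {r : K} (hr : r ≠ 0) :
    (r • M).charpoly = M.charpoly.scaleRoots r := by
  refine Polynomial.funext fun x => ?_
  obtain ⟨s, rfl⟩ : ∃ s, x = r * s := ⟨x / r, (mul_div_cancel₀ x hr).symm⟩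
  have : scalar ι (r * s) - r • M = r • (scalar ι s - M) := by
    simp only [smul_sub, scalar_apply, ← diagonal_smul, Pi.smul_def, smul_eq_mul]
  rw [Polynomial.scaleRoots_eval_mul, eval_charpoly, eval_charpoly, this, det_smul,
    charpoly_natDegree_eq_dim]

theorem charpoly_roots_eq_map_mul_of_mul_eq [Infinite K] {M N P : Matrix ι ι K} (hP : IsUnit P)
    {r : K} (hr : r ≠ 0) (h : P * (r • M) = N * P) :
    N.charpoly.roots = M.charpoly.roots.map (r * ·) := by
  obtain ⟨P, rfl⟩ := hP
  have hN : N = P.val * (r • M) * P.val⁻¹ := by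
    rw [h, mul_assoc, ← coe_units_inv, Units.mul_inv, mul_one]
  rw [hN, charpoly_units_conj, charpoly_smul M hr,
    Polynomial.roots_scaleRoots _ (isUnit_iff_ne_zero.2 hr)]

end Matrix

namespace ZMod

variable {p : ℕ} [NeZero p]

theorem add_one_eq_natCast_val_add_one (a : ZMod p) : a + 1 = ((a.val + 1 : ℕ) : ZMod p) := by
  push_cast
  rw [natCast_zmod_val]

theorem val_add_one_of_add_one_ne_zero {a : ZMod p} (h : a + 1 ≠ 0) :
    (a + 1).val = a.val + 1 := by
  have hne : a.val + 1 ≠ p := fun heq => h (by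
    rw [add_one_eq_natCast_val_add_one, heq, natCast_self])
  rw [add_one_eq_natCast_val_add_one, val_natCast, Nat.mod_eq_of_lt (by have := a.val_lt; omega)]

theorem val_add_one_of_add_one_eq_zero {a : ZMod p} (h : a + 1 = 0) : a.val + 1 = p := by
  rw [add_one_eq_natCast_val_add_one, natCast_eq_zero_iff] at h
  have := a.val_lt
  have := Nat.le_of_dvd (Nat.succ_pos _) h
  omega

end ZMod

def scaleLastClass {ι : Type*} {p : ℕ} (c : ι → ZMod p) (ε : ℝ) (A : Matrix ι ι ℝ) :
    Matrix ι ι ℝ :=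
  Matrix.of fun i j => (if c i + 1 = 0 then ε else 1) * A i j

section scaleLastClass

variable {ι : Type*} {p : ℕ} {A : Matrix ι ι ℝ} {c : ι → ZMod p} {ε : ℝ}

theorem matAbs_scaleLastClass (hA : ∀ i j, 0 ≤ A i j) (hε : |ε| = 1) :
    matAbs (scaleLastClass c ε A) = A := by
  ext i j
  simp only [matAbs, scaleLastClass, of_apply, abs_mul, abs_of_nonneg (hA i j)]
  split_ifs <;> simp [hε]

/-- With `D = diag (z ^ (c i).val)`, one has `D * (z • A) = scaleLastClass c (z ^ p) A * D`. -/
theorem spec_scaleLastClass [Fintype ι] [DecidableEq ι] [NeZero p]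
    (hc : ∀ i j, A i j ≠ 0 → c j = c i + 1) {z : ℂ} (hz : z ≠ 0) (hε : z ^ p = ε) :
    spec (scaleLastClass c ε A) = (spec A).map (z * ·) := by
  refine Matrix.charpoly_roots_eq_map_mul_of_mul_eq (P := diagonal fun i => z ^ (c i).val)
    (isUnit_diagonal.2 (Pi.isUnit_iff.2 fun i => (isUnit_iff_ne_zero.2 hz).pow _)) hz ?_
  ext i j
  simp only [diagonal_mul, mul_diagonal, Matrix.smul_apply, map_apply, scaleLastClass, of_apply,
    smul_eq_mul, Complex.ofReal_mul]
  by_cases hij : A i j = 0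
  · simp [hij]
  rw [hc i j hij]
  split_ifs with hlast
  · rw [hlast, ZMod.val_zero, ← hε, pow_zero, mul_one, ← mul_assoc, ← pow_succ,
      ZMod.val_add_one_of_add_one_eq_zero hlast]
  · rw [ZMod.val_add_one_of_add_one_ne_zero hlast]
    push_cast
    ring

end scaleLastClass

theorem stmt_11_general {n : ℕ} (A : Matrix (Fin n) (Fin n) ℝ)
    (hnn : ∀ i j, 0 ≤ A i j) (hirr : MatIrreducible A)
    (p : ℕ) (hp : IsPeriod A p) (hp1 : 1 < p) (k : ℕ) :
    ∃ B : Matrix (Fin n) (Fin n) ℝ, matAbs B = A ∧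
      spec B = (spec A).map (fun z => Complex.exp (Complex.I * Real.pi * k / p) * z) := by
  have : NeZero p := ⟨by omega⟩
  obtain ⟨c, hc⟩ := exists_cyclic_coloring hirr hp.1
  have hroot : Complex.exp (Complex.I * Real.pi * k / p) ^ p = ((-1 : ℝ) ^ k : ℝ) := by
    have hexp : (p : ℂ) * (Complex.I * Real.pi * k / p) = k * (Real.pi * Complex.I) := by
      field_simp [NeZero.ne p]
    rw [← Complex.exp_nat_mul, hexp]
    push_cast
    rw [Complex.exp_nat_mul, Complex.exp_pi_mul_I]
  exact ⟨scaleLastClass c ((-1) ^ k) A, matAbs_scaleLastClass hnn (by simp),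
    spec_scaleLastClass hc (Complex.exp_ne_zero _) hroot⟩

theorem stmt_11 {n : ℕ} (A : Matrix (Fin n) (Fin n) ℝ)
    (hnn : ∀ i j, 0 ≤ A i j) (hirr : MatIrreducible A)
    (p : ℕ) (hp : IsPeriod A p) (hp1 : 1 < p)
    (k : ℕ) (hk : k ≤ 2 * p - 1) :
    ∃ B : Matrix (Fin n) (Fin n) ℝ, matAbs B = A ∧
      spec B = (spec A).map (fun z => Complex.exp (Complex.I * Real.pi * k / p) * z) :=
  stmt_11_general A hnn hirr p hp hp1 k
end
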